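/- arXiv:2508.10800 — 4 statements merged into one kernel-verified Lean document; each statement's English description precedes it below -/
import Mathlib

section
/- Let (X,d) be a metric space, let S be a finite subset of X with a radius function r : X → ℝ, and let j ∈ X with r_j > 0. Assume: (separation) for all distinct i₁, i₂ ∈ S, d(i₁,i₂) ≥ r(i₁) + r(i₂) + √2·min(r(i₁), r(i₂)); and (uncovered) for all i ∈ S, d(i,j) > (3+2√2)·r_j. Then there exists at most one i ∈ S such that d(i,j) ≤ r(i) + r_j + √2·min(r(i), r_j); i.e., if i₁, i₂ ∈ S both satisfy this inequality then i₁ = i₂. -/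
theorem stmt_1 {X : Type*} [MetricSpace X] (S : Finset X) (r : X → ℝ) (j : X) (rj : ℝ)
    (hrj : 0 < rj)
    (hsep : ∀ i₁ ∈ S, ∀ i₂ ∈ S, i₁ ≠ i₂ →
      dist i₁ i₂ ≥ r i₁ + r i₂ + Real.sqrt 2 * min (r i₁) (r i₂))
    (hunc : ∀ i ∈ S, dist i j > (3 + 2 * Real.sqrt 2) * rj) :
    ∀ i₁ ∈ S, ∀ i₂ ∈ S,
      dist i₁ j ≤ r i₁ + rj + Real.sqrt 2 * min (r i₁) rj →
      dist i₂ j ≤ r i₂ + rj + Real.sqrt 2 * min (r i₂) rj →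
      i₁ = i₂ := by
  intro i₁ h₁ i₂ h₂ hd₁ hd₂
  by_contra hne
  set s := Real.sqrt 2 with hsdef
  have hs : s ^ 2 = 2 := Real.sq_sqrt (by norm_num)
  have hs0 : 0 < s := Real.sqrt_pos.mpr (by norm_num)
  have key : ∀ i ∈ S, dist i j ≤ r i + rj + s * min (r i) rj → r i > (2 + s) * rj := by
    intro i hi hd
    have hu := hunc i hi
    rcases le_total (r i) rj with h | h
    · exfalso
      rw [min_eq_left h] at hd
      nlinarith
    · rw [min_eq_right h] at hd
      nlinarith
  have k1 := key i₁ h₁ hd₁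
  have k2 := key i₂ h₂ hd₂
  have hr1 : rj ≤ r i₁ := by nlinarith
  have hr2 : rj ≤ r i₂ := by nlinarith
  rw [min_eq_right hr1] at hd₁
  rw [min_eq_right hr2] at hd₂
  have hm : (2 + s) * rj < min (r i₁) (r i₂) := lt_min k1 k2
  have hsep' := hsep i₁ h₁ i₂ h₂ hne
  have htri := dist_triangle i₁ j i₂
  rw [dist_comm j i₂] at htri
  nlinarith
end

section
/- Let (X,d) be a metric space, j ∈ X, r_j > 0 a real number, and i₁, i₂ ∈ X with radii r₁, r₂ satisfying r₁ > (2+√2)·r_j and r₂ > (2+√2)·r_j. If d(i₁,j) ≤ r₁ + r_j + √2·min(r₁, r_j) and d(i₂,j) ≤ r₂ + r_j + √2·min(r₂, r_j), then d(i₁,i₂) < r₁ + r₂ + √2·min(r₁, r₂). -/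
theorem stmt_2 {X : Type*} [MetricSpace X] (j i₁ i₂ : X) (rj r₁ r₂ : ℝ) (hrj : 0 < rj)
    (hr₁ : r₁ > (2 + Real.sqrt 2) * rj) (hr₂ : r₂ > (2 + Real.sqrt 2) * rj)
    (h₁ : dist i₁ j ≤ r₁ + rj + Real.sqrt 2 * min r₁ rj)
    (h₂ : dist i₂ j ≤ r₂ + rj + Real.sqrt 2 * min r₂ rj) :
    dist i₁ i₂ < r₁ + r₂ + Real.sqrt 2 * min r₁ r₂ := by
  have hs : (1:ℝ) ≤ Real.sqrt 2 := by
    nlinarith [Real.sq_sqrt (by norm_num : (2:ℝ) ≥ 0), Real.sqrt_nonneg 2]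
  have hrj1 : rj < r₁ := by nlinarith
  have hrj2 : rj < r₂ := by nlinarith
  rw [min_eq_right hrj1.le] at h₁
  rw [min_eq_right hrj2.le] at h₂
  have htri := dist_triangle i₁ j i₂
  rw [dist_comm j i₂] at htri
  have hmin : min r₁ r₂ > (2 + Real.sqrt 2) * rj := lt_min hr₁ hr₂
  have hsq : Real.sqrt 2 * Real.sqrt 2 = 2 := Real.mul_self_sqrt (by norm_num)
  nlinarith [hmin, hsq]
end

section
/- Let (X,d) be a metric space, let i, i', j ∈ X, let R_j > 0 be a real number, and set r_j = (10/9)·R_j. Let r_i ≥ 0 be a real number. If d(i,i') ≤ r_i, d(i',j) > 11·R_j, and d(i,j) ≤ r_i + r_j + 2·min(r_i, r_j), then r_i > (69/20)·r_j. -/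
theorem stmt_4 {X : Type*} [MetricSpace X] (i i' j : X) (Rj rj ri : ℝ)
    (hRj : 0 < Rj) (hrj : rj = (10 / 9) * Rj) (hri : 0 ≤ ri)
    (h1 : dist i i' ≤ ri) (h2 : dist i' j > 11 * Rj)
    (h3 : dist i j ≤ ri + rj + 2 * min ri rj) :
    ri > (69 / 20) * rj := by
  have ht := dist_triangle i' i j
  rw [dist_comm i' i] at ht
  have hm : min ri rj ≤ rj := min_le_right _ _
  nlinarith
end

section
/- Let (X,d) be a metric space, let A be a finite subset of X with a radius function r : X → ℝ and a map φ : X → X assigning to each i ∈ A a point with d(i, φ(i)) ≤ r(i). Let j ∈ X and R_j > 0 a real number, and set r_j = (10/9)·R_j. Assume: (separation) for all distinct i₁, i₂ ∈ A, d(i₁,i₂) ≥ r(i₁) + r(i₂) + 2·min(r(i₁), r(i₂)); and for all i ∈ A, d(φ(i), j) > 11·R_j. Then there exists at most one i ∈ A such that d(i,j) ≤ r(i) + r_j + 2·min(r(i), r_j); i.e., if i₁, i₂ ∈ A both satisfy this inequality then i₁ = i₂. -/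
theorem stmt_5 {X : Type*} [MetricSpace X] (A : Finset X) (r : X → ℝ) (φ : X → X)
    (j : X) (Rj rj : ℝ) (hRj : 0 < Rj) (hrj : rj = (10 / 9) * Rj)
    (hφ : ∀ i ∈ A, dist i (φ i) ≤ r i)
    (hsep : ∀ i₁ ∈ A, ∀ i₂ ∈ A, i₁ ≠ i₂ →
      dist i₁ i₂ ≥ r i₁ + r i₂ + 2 * min (r i₁) (r i₂))
    (hfar : ∀ i ∈ A, dist (φ i) j > 11 * Rj) :
    ∀ i₁ ∈ A, ∀ i₂ ∈ A,
      dist i₁ j ≤ r i₁ + rj + 2 * min (r i₁) rj →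
      dist i₂ j ≤ r i₂ + rj + 2 * min (r i₂) rj →
      i₁ = i₂ := by
  have key : ∀ i ∈ A, dist i j ≤ r i + rj + 2 * min (r i) rj →
      r i > 23 / 6 * Rj := by
    intro i hi hconf
    have h1 : dist (φ i) j ≤ dist (φ i) i + dist i j := dist_triangle _ _ _
    have h2 : dist (φ i) i ≤ r i := by rw [dist_comm]; exact hφ i hi
    have h3 : min (r i) rj ≤ rj := min_le_right _ _
    have h4 := hfar i hi
    nlinarith
  intro i₁ hi₁ i₂ hi₂ h₁ h₂
  by_contra hne
  have hk₁ := key i₁ hi₁ h₁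
  have hk₂ := key i₂ hi₂ h₂
  have hsep' := hsep i₁ hi₁ i₂ hi₂ hne
  have htri : dist i₁ i₂ ≤ dist i₁ j + dist j i₂ := dist_triangle _ _ _
  have hmin1 : min (r i₁) rj ≤ rj := min_le_right _ _
  have hmin2 : min (r i₂) rj ≤ rj := min_le_right _ _
  have hmin : min (r i₁) (r i₂) > 23 / 6 * Rj := lt_min hk₁ hk₂
  rw [dist_comm j i₂] at htri
  nlinarith
end
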